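/- arXiv:2103.06853 — 5 statements merged into one kernel-verified Lean document; each statement's English description precedes it below -/
import Mathlib

section
/- Let Q be a finite linearly ordered set, and let g be a function from subsets of Q to {0,1} with g(∅) = 1. Then for every subset T ⊆ Q: 1_{T=∅} = g*(T) + ∑_S (−1)^{|S|} (g(S ∖ {min S}) − g(S)), where the sum ranges over all nonempty subsets S ⊆ T such that every q ∈ Q with q < min(S) satisfies q ∉ T. -/
/-!
Write a nonempty `T` as `insert a s` with `a` below every element of `s`. The sets in the second
sum are then exactly the subsets of `T` containing `a`, i.e. the sets `insert a U` with `U ⊆ s`,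
and for these `S ∖ {min S} = U`. Splitting the Möbius sum over `T` the same way, the term of
`insert a U` and the term of `U` cancel the corresponding term of the second sum.
-/

namespace Finset

variable {α : Type*} [LinearOrder α] {a : α} {s S : Finset α}

theorem min_insert_of_forall_le (ha : ∀ x ∈ s, a ≤ x) : (insert a s).min = a := by
  rw [min_insert]
  exact min_eq_left (Finset.le_min fun x hx => WithTop.coe_le_coe.mpr (ha x hx))

theorem filter_ne_min_insert_of_forall_lt (ha : ∀ x ∈ s, a < x) :
    (insert a s).filter (fun q : α => (q : WithTop α) ≠ (insert a s).min) = s := by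
  rw [min_insert_of_forall_le fun x hx => (ha x hx).le]
  simp only [ne_eq, WithTop.coe_inj]
  rw [filter_ne', erase_insert fun h => lt_irrefl a (ha a h)]

theorem ne_empty_and_forall_lt_min_notMem_iff (ha : ∀ x ∈ s, a < x) (hS : S ⊆ insert a s) :
    (S ≠ ∅ ∧ ∀ q : α, (q : WithTop α) < S.min → q ∉ insert a s) ↔ a ∈ S := by
  constructor
  · rintro ⟨hne, hbelow⟩
    by_contra haS
    have hne' : S.Nonempty := nonempty_iff_ne_empty.mpr hne
    have hmin : S.min' hne' ∈ s :=
      (subset_insert_iff_of_notMem haS).mp hS (S.min'_mem hne')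
    refine hbelow a ?_ (mem_insert_self a s)
    rw [← coe_min' hne']
    exact WithTop.coe_lt_coe.mpr (ha _ hmin)
  · intro haS
    refine ⟨ne_empty_of_mem haS, fun q hq hqs => ?_⟩
    have hqa : q < a := WithTop.coe_lt_coe.mp (hq.trans_le (min_le haS))
    rcases mem_insert.mp hqs with rfl | hq'
    · exact lt_irrefl q hqa
    · exact lt_asymm hqa (ha q hq')

end Finset

open Finset

theorem sum_powerset_insert_add_sum_filter_mem_eq_zero {α R : Type*} [LinearOrder α]
    [CommRing R] {a : α} {s : Finset α} (ha : ∀ x ∈ s, a < x) (g : Finset α → R) :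
    (∑ U ∈ (insert a s).powerset, (-1 : R) ^ U.card * g U) +
      ∑ S ∈ (insert a s).powerset.filter (a ∈ ·),
        (-1 : R) ^ S.card * (g (S.filter fun q => (q : WithTop α) ≠ S.min) - g S) = 0 := by
  have has : a ∉ s := fun h => lt_irrefl a (ha a h)
  have hnotMem : ∀ U ∈ s.powerset, a ∉ U := fun U hU h => has (mem_powerset.mp hU h)
  rw [sum_filter, sum_powerset_insert has, sum_powerset_insert has,
    sum_congr rfl fun U hU => if_neg (hnotMem U hU), sum_const_zero, zero_add,
    add_assoc, ← sum_add_distrib, ← sum_add_distrib]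
  refine sum_eq_zero fun U hU => ?_
  have haU : ∀ x ∈ U, a < x := fun x hx => ha x (mem_powerset.mp hU hx)
  rw [if_pos (mem_insert_self a U), filter_ne_min_insert_of_forall_lt haU,
    card_insert_of_notMem (hnotMem U hU)]
  ring

open Finset in
theorem lem_whithe_general (Q : Type*) [Fintype Q] [LinearOrder Q]
    (g : Finset Q → ℤ) (hgempty : g ∅ = 1)
    (T : Finset Q) :
    (if T = ∅ then (1 : ℤ) else 0) =
      (∑ U ∈ T.powerset, (-1 : ℤ) ^ U.card * g U) +
        ∑ S ∈ T.powerset.filter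
            (fun S => S ≠ ∅ ∧ ∀ q : Q, (q : WithTop Q) < S.min → q ∉ T),
          (-1 : ℤ) ^ S.card *
            (g (S.filter fun q => (q : WithTop Q) ≠ S.min) - g S) := by
  induction T using Finset.induction_on_min with
  | empty => simp [hgempty, filter_singleton]
  | insert a s ha _ =>
    rw [if_neg (insert_ne_empty a s), filter_congr fun S hS =>
      ne_empty_and_forall_lt_min_notMem_iff ha (mem_powerset.mp hS)]
    exact (sum_powerset_insert_add_sum_filter_mem_eq_zero ha g).symm

open Finset in
theorem lem_whithe (Q : Type*) [Fintype Q] [LinearOrder Q]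
    (g : Finset Q → ℤ) (hg01 : ∀ S : Finset Q, g S = 0 ∨ g S = 1) (hgempty : g ∅ = 1)
    (T : Finset Q) :
    (if T = ∅ then (1 : ℤ) else 0) =
      (∑ U ∈ T.powerset, (-1 : ℤ) ^ U.card * g U) +
        ∑ S ∈ T.powerset.filter
            (fun S => S ≠ ∅ ∧ ∀ q : Q, (q : WithTop Q) < S.min → q ∉ T),
          (-1 : ℤ) ^ S.card *
            (g (S.filter fun q => (q : WithTop Q) ≠ S.min) - g S) :=
  lem_whithe_general Q g hgempty T
end

section
/- Let X be a finite set and let 𝒬 be a finite collection of subsets of X. Then | ∑_{𝒮 ⊆ 𝒬, ⋃𝒮 = X} (−1)^{|𝒮|} | ≤ 2^{|X|}, where the sum runs over all subcollections 𝒮 of 𝒬 whose union equals X (with the convention that the union of the empty subcollection is the empty set). -/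
theorem lem_crosscut (α : Type*) [DecidableEq α] (X : Finset α) (Q : Finset (Finset α))
    (hQ : ∀ A ∈ Q, A ⊆ X) :
    |∑ S ∈ Q.powerset.filter (fun S => S.sup id = X), (-1 : ℤ) ^ S.card| ≤ 2 ^ X.card := by
  classical
  have key : ∑ S ∈ Q.powerset.filter (fun S => S.sup id = X), (-1 : ℤ) ^ S.card
      = ∑ T ∈ X.powerset, (-1:ℤ)^T.card *
          (if (Q.filter (fun A => Disjoint T A)) = ∅ then 1 else 0) := by
    rw [Finset.sum_filter]
    have h1 : ∀ S ∈ Q.powerset,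
        (if S.sup id = X then (-1:ℤ)^S.card else 0)
        = ∑ T ∈ X.powerset,
            if Disjoint T (S.sup id) then (-1:ℤ)^S.card * (-1)^T.card else 0 := by
      intro S hS
      have hS' : S ⊆ Q := Finset.mem_powerset.mp hS
      have hsub : S.sup id ⊆ X := Finset.sup_le fun A hA => hQ A (hS' hA)
      have hpow : X.powerset.filter (fun T => Disjoint T (S.sup id))
          = (X \ S.sup id).powerset := by
        ext T
        simp [Finset.subset_sdiff]
      rw [← Finset.sum_filter, hpow, ← Finset.mul_sum,
        Finset.sum_powerset_neg_one_pow_card]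
      have hiff : X \ S.sup id = ∅ ↔ S.sup id = X := by
        rw [Finset.sdiff_eq_empty_iff_subset]
        exact ⟨fun h => subset_antisymm hsub h, fun h => h ▸ subset_rfl⟩
      split_ifs with h₁ h₂ h₂
      · ring
      · exact absurd (hiff.mpr h₁) h₂
      · exact absurd (hiff.mp h₂) h₁
      · ring
    rw [Finset.sum_congr rfl h1, Finset.sum_comm]
    refine Finset.sum_congr rfl fun T hT => ?_
    have hPT : Q.powerset.filter (fun S => Disjoint T (S.sup id))
        = (Q.filter (fun A => Disjoint T A)).powerset := by
      ext S
      simp only [Finset.mem_filter, Finset.mem_powerset]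
      constructor
      · rintro ⟨h₁, h₂⟩ A hA
        exact Finset.mem_filter.mpr
          ⟨h₁ hA, h₂.mono_right (Finset.le_sup (f := id) hA)⟩
      · intro h
        refine ⟨fun A hA => (Finset.mem_filter.mp (h hA)).1, ?_⟩
        rw [Finset.disjoint_sup_right]
        exact fun A hA => (Finset.mem_filter.mp (h hA)).2
    rw [← Finset.sum_filter, hPT]
    rw [← Finset.sum_mul, Finset.sum_powerset_neg_one_pow_card, mul_comm]
  rw [key]
  calc |∑ T ∈ X.powerset, (-1:ℤ)^T.card *
          (if (Q.filter (fun A => Disjoint T A)) = ∅ then 1 else 0)|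
      ≤ ∑ T ∈ X.powerset, |(-1:ℤ)^T.card *
          (if (Q.filter (fun A => Disjoint T A)) = ∅ then 1 else 0)| :=
        Finset.abs_sum_le_sum_abs _ _
    _ ≤ ∑ T ∈ X.powerset, 1 := by
        refine Finset.sum_le_sum fun T _ => ?_
        rw [abs_mul, abs_pow, abs_neg, abs_one, one_pow, one_mul]
        split_ifs <;> simp
    _ = 2 ^ X.card := by simp [Finset.card_powerset]
end

section
/- Let M = (b_{i,j})_{1≤i,j≤m} be a nonsingular m×m matrix with integer entries satisfying |b_{i,j}| ≤ C for all i, j. Let c ∈ ℤ^m, let r₁, …, r_m be integers with r_i ≥ M₀ for all i, where M₀ ≥ 1, and let N₁, …, N_m be real numbers with N_i ≥ M₀. Then the number of vectors n ∈ ℤ^m with N_i ≤ n_i ≤ 2N_i for all i and r_i ∣ (M n + c)_i for all 1 ≤ i ≤ m is at most (2Cm/M₀)^m · ∏_{i=1}^m N_i. -/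
theorem lem_bgeonum (m : ℕ) (M : Matrix (Fin m) (Fin m) ℤ) (C M₀ : ℝ)
    (c r : Fin m → ℤ) (Nv : Fin m → ℝ)
    (hdet : M.det ≠ 0)
    (hC : ∀ i j, |(M i j : ℝ)| ≤ C)
    (hM₀ : 1 ≤ M₀)
    (hr : ∀ i, M₀ ≤ (r i : ℝ))
    (hNv : ∀ i, M₀ ≤ Nv i) :
    ((Set.ncard {n : Fin m → ℤ |
        (∀ i, Nv i ≤ (n i : ℝ) ∧ (n i : ℝ) ≤ 2 * Nv i) ∧
        ∀ i, r i ∣ (M.mulVec n + c) i} : ℕ) : ℝ) ≤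
      (2 * C * m / M₀) ^ m * ∏ i, Nv i := by
  rcases Nat.eq_zero_or_pos m with rfl | hm
  · have hset : {n : Fin 0 → ℤ |
        (∀ i, Nv i ≤ (n i : ℝ) ∧ (n i : ℝ) ≤ 2 * Nv i) ∧
        ∀ i, r i ∣ (M.mulVec n + c) i} = Set.univ :=
      Set.eq_univ_of_forall (fun n => ⟨fun i => i.elim0, fun i => i.elim0⟩)
    rw [hset]
    simp [Set.ncard_univ, Nat.card_unique]
  · have hM₀pos : (0:ℝ) < M₀ := lt_of_lt_of_le one_pos hM₀
    have hmR : (1:ℝ) ≤ (m:ℝ) := by exact_mod_cast hm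
    have hmpos : (0:ℝ) < (m:ℝ) := lt_of_lt_of_le one_pos hmR
    have hC1 : (1:ℝ) ≤ C := by
      by_contra hlt
      push_neg at hlt
      have hzero : M = 0 := by
        ext i j
        by_contra hij
        have h1 : (1:ℤ) ≤ |M i j| := Int.one_le_abs hij
        have h1' : (1:ℝ) ≤ |(M i j : ℝ)| := by
          rw [← Int.cast_abs]; exact_mod_cast h1
        linarith [hC i j]
      rw [hzero] at hdet
      exact hdet (by haveI : Nonempty (Fin m) := ⟨⟨0, hm⟩⟩; exact Matrix.det_zero)
    have hCpos : (0:ℝ) < C := lt_of_lt_of_le one_pos hC1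
    haveI : Nonempty (Fin m) := ⟨⟨0, hm⟩⟩
    set lam : ℝ := M₀ / (C * m) with hlamdef
    have hlampos : 0 < lam := div_pos hM₀pos (mul_pos hCpos hmpos)
    set T : Set (Fin m → ℤ) := {n : Fin m → ℤ |
        (∀ i, Nv i ≤ (n i : ℝ) ∧ (n i : ℝ) ≤ 2 * Nv i) ∧
        ∀ i, r i ∣ (M.mulVec n + c) i} with hT
    set f : (Fin m → ℤ) → (Fin m → ℤ) :=
      fun n j => ⌊(((n j : ℝ)) - Nv j) / lam⌋ with hf
    set S : Finset (Fin m → ℤ) :=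
      Fintype.piFinset (fun j => Finset.Icc (0:ℤ) ⌊Nv j / lam⌋) with hS
    have hmaps : ∀ n ∈ T, f n ∈ (S : Set (Fin m → ℤ)) := by
      intro n hn
      simp only [hS, Finset.coe_sort_coe, Finset.mem_coe, Fintype.mem_piFinset,
        Finset.mem_Icc]
      intro j
      constructor
      · apply Int.floor_nonneg.mpr
        apply div_nonneg _ hlampos.le
        linarith [(hn.1 j).1]
      · apply Int.floor_le_floor
        have h9 : ((n j : ℝ)) - Nv j ≤ Nv j := by linarith [(hn.1 j).2]
        exact (div_le_div_iff_of_pos_right hlampos).mpr h9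
    have hinj : Set.InjOn f T := by
      intro n hn n' hn' hfe
      by_contra hne
      have hu : n - n' ≠ 0 := sub_ne_zero.mpr hne
      have hMu : M.mulVec (n - n') ≠ 0 := by
        intro h0
        apply hu
        have h1 : M.adjugate.mulVec (M.mulVec (n - n')) = M.det • (n - n') := by
          rw [Matrix.mulVec_mulVec, Matrix.adjugate_mul, Matrix.smul_mulVec,
            Matrix.one_mulVec]
        rw [h0, Matrix.mulVec_zero] at h1
        funext j
        have h2 := congrFun h1.symm j
        simp only [Pi.smul_apply, smul_eq_mul, Pi.zero_apply] at h2
        rcases mul_eq_zero.mp h2 with h | h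
        · exact absurd h hdet
        · simpa using h
      obtain ⟨i, hi⟩ := Function.ne_iff.mp hMu
      simp only [Pi.zero_apply] at hi
      have hdvd : r i ∣ M.mulVec (n - n') i := by
        have h3 := dvd_sub (hn.2 i) (hn'.2 i)
        simpa [Matrix.mulVec_sub, Pi.add_apply, Pi.sub_apply,
          add_sub_add_right_eq_sub] using h3
      have hlow : M₀ ≤ |((M.mulVec (n - n') i : ℤ) : ℝ)| := by
        have hpos : (0:ℤ) < |M.mulVec (n - n') i| := abs_pos.mpr hi
        have h4 : r i ≤ |M.mulVec (n - n') i| :=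
          Int.le_of_dvd hpos ((dvd_abs _ _).mpr hdvd)
        have h4' : ((r i : ℤ) : ℝ) ≤ |((M.mulVec (n - n') i : ℤ) : ℝ)| := by
          rw [← Int.cast_abs]; exact_mod_cast h4
        linarith [hr i]
      have key : ∀ j, |((n j : ℝ)) - (n' j : ℝ)| < lam := by
        intro j
        have hfj : ⌊(((n j : ℝ)) - Nv j) / lam⌋ = ⌊(((n' j : ℝ)) - Nv j) / lam⌋ :=
          congrFun hfe j
        have habs := Int.abs_sub_lt_one_of_floor_eq_floor hfj
        have hxy : (((n j : ℝ)) - Nv j) / lam - (((n' j : ℝ)) - Nv j) / lam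
            = (((n j : ℝ)) - (n' j : ℝ)) / lam := by
          field_simp
          ring
        rw [hxy, abs_div, abs_of_pos hlampos, div_lt_one hlampos] at habs
        exact habs
      have hrepr : ((M.mulVec (n - n') i : ℤ) : ℝ)
          = ∑ j, (M i j : ℝ) * (((n j : ℝ)) - (n' j : ℝ)) := by
        simp only [Matrix.mulVec, dotProduct, Pi.sub_apply]
        push_cast
        exact Finset.sum_congr rfl fun j _ => rfl
      have hup : |((M.mulVec (n - n') i : ℤ) : ℝ)| < M₀ := by
        rw [hrepr]
        calc |∑ j, (M i j : ℝ) * (((n j : ℝ)) - (n' j : ℝ))|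
            ≤ ∑ j, |(M i j : ℝ) * (((n j : ℝ)) - (n' j : ℝ))| :=
              Finset.abs_sum_le_sum_abs _ _
          _ < ∑ _j : Fin m, C * lam := by
              apply Finset.sum_lt_sum_of_nonempty Finset.univ_nonempty
              intro j _
              rw [abs_mul]
              calc |(M i j : ℝ)| * |((n j : ℝ)) - (n' j : ℝ)|
                  ≤ C * |((n j : ℝ)) - (n' j : ℝ)| := by
                    apply mul_le_mul_of_nonneg_right (hC i j) (abs_nonneg _)
                _ < C * lam := by
                    exact mul_lt_mul_of_pos_left (key j) hCpos
          _ = M₀ := by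
              rw [Finset.sum_const, Finset.card_univ, Fintype.card_fin, nsmul_eq_mul,
                hlamdef]
              field_simp
      linarith
    have hcard : T.ncard ≤ S.card := by
      have h5 := Set.ncard_le_ncard_of_injOn f hmaps hinj S.finite_toSet
      simpa [Set.ncard_coe_finset] using h5
    have hScard : S.card = ∏ j, (⌊Nv j / lam⌋ + 1).toNat := by
      rw [hS, Fintype.card_piFinset]
      congr 1
      funext j
      rw [Int.card_Icc]
      congr 1
      ring
    have hfac : ∀ j : Fin m, (((⌊Nv j / lam⌋ + 1).toNat : ℕ) : ℝ)
        ≤ 2 * C * m / M₀ * Nv j := by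
      intro j
      have hy1 : (1:ℝ) ≤ Nv j / lam := by
        rw [hlamdef, div_div_eq_mul_div, le_div_iff₀ hM₀pos]
        have h6 : M₀ ≤ Nv j := hNv j
        have h10 : (1:ℝ) ≤ C * m := by nlinarith
        have h11 : (1:ℝ) * Nv j ≤ (C * ↑m) * Nv j :=
          mul_le_mul_of_nonneg_right h10 (by linarith)
        nlinarith
      have hynn : (0:ℝ) ≤ Nv j / lam := by linarith
      have hfl : (0:ℤ) ≤ ⌊Nv j / lam⌋ + 1 := by
        have := Int.floor_nonneg.mpr hynn
        omega
      have hcast : (((⌊Nv j / lam⌋ + 1).toNat : ℕ) : ℝ) = (⌊Nv j / lam⌋ : ℝ) + 1 := by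
        have h12 := Int.toNat_of_nonneg hfl
        exact_mod_cast congrArg (Int.cast : ℤ → ℝ) h12
      rw [hcast]
      have h7 : (⌊Nv j / lam⌋ : ℝ) ≤ Nv j / lam := Int.floor_le _
      have h8 : 2 * C * m / M₀ * Nv j = 2 * (Nv j / lam) := by
        rw [hlamdef]
        field_simp
      rw [h8]
      linarith
    calc ((T.ncard : ℕ) : ℝ) ≤ (S.card : ℝ) := by exact_mod_cast hcard
      _ = ∏ j, (((⌊Nv j / lam⌋ + 1).toNat : ℕ) : ℝ) := by
          rw [hScard]; push_cast; ring
      _ ≤ ∏ j, (2 * C * m / M₀ * Nv j) := by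
          apply Finset.prod_le_prod
          · intro j _; positivity
          · intro j _; exact hfac j
      _ = (2 * C * m / M₀) ^ m * ∏ i, Nv i := by
          rw [Finset.prod_mul_distrib, Finset.prod_const, Finset.card_univ,
            Fintype.card_fin]
end

section
/- Let A be an n×m matrix over a field such that every row of A has at least one nonzero entry and no column of A has more than κ nonzero entries, where κ is a positive integer. Then rank(A) ≥ n/κ. -/
open Matrix in
theorem lem_linearny (F : Type*) [Field F] [DecidableEq F] (n m κ : ℕ)
    (A : Matrix (Fin n) (Fin m) F) (hκ : 0 < κ)
    (hrow : ∀ i, ∃ j, A i j ≠ 0)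
    (hcol : ∀ j, (Finset.univ.filter fun i => A i j ≠ 0).card ≤ κ) :
    (n : ℝ) / (κ : ℝ) ≤ (A.rank : ℝ) := by
  classical
  have hκR : (0:ℝ) < κ := by exact_mod_cast hκ
  rw [div_le_iff₀ hκR]
  have key : n ≤ A.rank * κ := by
    obtain ⟨b, hbsub, hbspan, hbli⟩ :=
      exists_linearIndependent F (Set.range Aᵀ)
    have hbfin : b.Finite := (Set.finite_range Aᵀ).subset hbsub
    haveI : Fintype b := hbfin.fintype
    have hrank : A.rank = hbfin.toFinset.card := by
      rw [Matrix.rank_eq_finrank_span_cols]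
      change Module.finrank F (Submodule.span F (Set.range Aᵀ)) = _
      rw [← hbspan,
        finrank_span_set_eq_card hbli]
      congr 1
      ext x; simp
    -- each row has a nonzero entry in some column of b
    have hrowb : ∀ i : Fin n, ∃ c ∈ hbfin.toFinset, c i ≠ 0 := by
      intro i
      by_contra h
      push_neg at h
      have hzero : ∀ c ∈ b, c i = 0 := fun c hc => h c (hbfin.mem_toFinset.2 hc)
      obtain ⟨j, hj⟩ := hrow i
      have hmem : Aᵀ j ∈ Submodule.span F b := by
        rw [hbspan]
        exact Submodule.subset_span ⟨j, rfl⟩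
      have : Submodule.span F b ≤ LinearMap.ker (LinearMap.proj (R := F) (φ := fun _ : Fin n => F) i) := by
        rw [Submodule.span_le]
        intro c hc
        simpa using hzero c hc
      exact hj (this hmem)
    choose f hf hfne using hrowb
    -- choose for each column in b a column index j with same column
    have hcolidx : ∀ c ∈ hbfin.toFinset, ∃ j : Fin m, Aᵀ j = c := by
      intro c hc
      exact hbsub (hbfin.mem_toFinset.1 hc)
    choose g hg using hcolidx
    have := Finset.card_eq_sum_card_fiberwise (f := f) (s := Finset.univ) (t := hbfin.toFinset)
      (fun i _ => hf i)
    rw [Finset.card_univ, Fintype.card_fin] at this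
    refine le_of_eq this |>.trans ?_
    rw [hrank]
    calc ∑ c ∈ hbfin.toFinset, (Finset.univ.filter fun i => f i = c).card
        ≤ ∑ c ∈ hbfin.toFinset, κ := by
          refine Finset.sum_le_sum fun c hc => le_trans ?_ (hcol (g c hc))
          apply Finset.card_le_card
          intro i hi
          simp only [Finset.mem_filter, Finset.mem_univ, true_and] at hi ⊢
          have : A i (g c hc) = c i := by
            have := hg c hc
            exact congrFun this i
          rw [this]
          exact hi ▸ hfne i
      _ = hbfin.toFinset.card * κ := by rw [Finset.sum_const, smul_eq_mul]
  calc (n:ℝ) ≤ (A.rank * κ : ℕ) := by exact_mod_cast key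
    _ = (A.rank : ℝ) * κ := by push_cast; ring
end

section
/- Let G be a finite directed graph without loops or multiple arrows, in which every vertex has positive in-degree. Let S be a set of m vertices of G. Then there is a subset S' ⊆ S with |S'| ≥ m/3 such that for every w ∈ S' there is an arrow (v, w) of G with v ∉ S'. -/
/-!
Choosing for every vertex `w` one in-neighbour `f w` gives a map without fixed points, and it
suffices to find `S' ⊆ S` with `3 * #S' ≥ #S` and `f w ∉ S'` for all `w ∈ S'`. By counting,
some `w ∈ S` has at most one `f`-preimage in `S`. Put `w` into `S'`, discard `w`, `f w` and that
preimage from `S`, and recurse: at most three vertices of `S` are spent per vertex of `S'`.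
-/

open Finset

namespace Finset

variable {α : Type*} [DecidableEq α]

lemma exists_mem_card_fiber_le_one (f : α → α) {S : Finset α} (hS : S.Nonempty) :
    ∃ w ∈ S, #{x ∈ S | f x = w} ≤ 1 := by
  by_contra! hfibers
  have : 2 * #S ≤ #S :=
    calc 2 * #S = ∑ _w ∈ S, 2 := by simp [mul_comm]
      _ ≤ ∑ w ∈ S, #{x ∈ S | f x = w} := sum_le_sum hfibers
      _ = #{x ∈ S | f x ∈ S} := sum_card_fiberwise_eq_card_filter S S f
      _ ≤ #S := card_filter_le S _
  exact hS.card_pos.ne' (by omega)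

lemma exists_subset_card_le_three_mul_card_forall_apply_notMem (f : α → α) (hf : ∀ x, f x ≠ x)
    (S : Finset α) : ∃ S' ⊆ S, #S ≤ 3 * #S' ∧ ∀ w ∈ S', f w ∉ S' := by
  induction S using Finset.strongInduction with
  | H S ih =>
  rcases S.eq_empty_or_nonempty with rfl | hS
  · exact ⟨∅, subset_refl _, by simp, by simp⟩
  obtain ⟨w, hwS, hfiber⟩ := exists_mem_card_fiber_le_one f hS
  set D := insert w (insert (f w) {x ∈ S | f x = w})
  have hD : #D ≤ 3 := (card_insert_le _ _).trans (by grind [card_insert_le])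
  have hwD : w ∈ D := mem_insert_self _ _
  have hssub : S \ D ⊂ S :=
    (ssubset_iff_of_subset sdiff_subset).2 ⟨w, hwS, fun h => (mem_sdiff.mp h).2 hwD⟩
  obtain ⟨T', hT', hcard, hindep⟩ := ih (S \ D) hssub
  have hDT' : ∀ x ∈ D, x ∉ T' := fun x hx hxT' => (mem_sdiff.mp (hT' hxT')).2 hx
  refine ⟨insert w T', insert_subset hwS (hT'.trans sdiff_subset), ?_, ?_⟩
  · have := card_le_card_sdiff_add_card (s := S) (t := D)
    rw [card_insert_of_notMem (hDT' w hwD)]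
    omega
  · intro x hx hfx
    rcases mem_insert.mp hx with rfl | hxT'
    · exact (mem_insert.mp hfx).elim (hf x) (hDT' _ (by simp [D]))
    · rcases mem_insert.mp hfx with hfxw | hfxT'
      · exact hDT' x (by simp [D, (mem_sdiff.mp (hT' hxT')).1, hfxw]) hxT'
      · exact hindep x hxT' hfxT'

end Finset

theorem lem_palomas_general (V : Type*) (R : V → V → Prop)
    (hirr : ∀ v : V, ¬R v v) (hin : ∀ w : V, ∃ v : V, R v w) (S : Finset V) :
    ∃ S' : Finset V, S' ⊆ S ∧ (S.card : ℝ) / 3 ≤ (S'.card : ℝ) ∧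
      ∀ w ∈ S', ∃ v : V, v ∉ S' ∧ R v w := by
  classical
  choose f hf using hin
  have hf_ne : ∀ w, f w ≠ w := fun w hw => hirr w (by simpa [hw] using hf w)
  obtain ⟨S', hS'S, hcard, hindep⟩ :=
    exists_subset_card_le_three_mul_card_forall_apply_notMem f hf_ne S
  refine ⟨S', hS'S, ?_, fun w hw => ⟨f w, hindep w hw, hf w⟩⟩
  rw [div_le_iff₀ three_pos]
  exact_mod_cast hcard.trans_eq (mul_comm _ _)

theorem lem_palomas (V : Type*) [Fintype V] (R : V → V → Prop)
    (hirr : ∀ v : V, ¬R v v) (hin : ∀ w : V, ∃ v : V, R v w) (S : Finset V) :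
    ∃ S' : Finset V, S' ⊆ S ∧ (S.card : ℝ) / 3 ≤ (S'.card : ℝ) ∧
      ∀ w ∈ S', ∃ v : V, v ∉ S' ∧ R v w :=
  lem_palomas_general V R hirr hin S
end
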